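/- arXiv:1806.03820 — 2 statements merged into one kernel-verified Lean document; each statement's English description precedes it below -/
import Mathlib

section
/- Let α, α' be α-vectors (functions S → ℝ) with values in [R_min/(1−γ), R_max/(1−γ)], and let b, b' be probability distributions on finite S with ‖b − b'‖₁ ≤ ε. If α is optimal at b' among a set Γ containing α' which is optimal at b (i.e., b'·α ≥ b'·α' and b·α' ≥ b·α), then b·α' − b·α ≤ ((R_max − R_min)/(1−γ))·ε. -/
theorem pbvi_one_step_error (S : Type*) [Fintype S] [Nonempty S]
    (γ ε Rmin Rmax : ℝ) (hγ0 : 0 ≤ γ) (hγ1 : γ < 1)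
    (α α' : S → ℝ)
    (hα : ∀ s, Rmin / (1 - γ) ≤ α s ∧ α s ≤ Rmax / (1 - γ))
    (hα' : ∀ s, Rmin / (1 - γ) ≤ α' s ∧ α' s ≤ Rmax / (1 - γ))
    (b b' : S → ℝ) (hb : ∀ s, 0 ≤ b s) (hb1 : ∑ s, b s = 1)
    (hb' : ∀ s, 0 ≤ b' s) (hb'1 : ∑ s, b' s = 1)
    (hdist : ∑ s, |b s - b' s| ≤ ε)
    (hopt : ∑ s, b' s * α s ≥ ∑ s, b' s * α' s)
    (hopt' : ∑ s, b s * α' s ≥ ∑ s, b s * α s) :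
    ∑ s, b s * α' s - ∑ s, b s * α s ≤ (Rmax - Rmin) / (1 - γ) * ε := by
  set M := (Rmax - Rmin) / (1 - γ) with hM
  have hMnn : 0 ≤ M := by
    obtain s := Classical.arbitrary S
    have h1 := (hα s).1
    have h2 := (hα s).2
    have : Rmin / (1 - γ) ≤ Rmax / (1 - γ) := le_trans h1 h2
    have : 0 ≤ Rmax / (1 - γ) - Rmin / (1 - γ) := by linarith
    rw [hM, sub_div]
    linarith
  have hbound : ∀ s, |α' s - α s| ≤ M := by
    intro s
    have h1 := hα s
    have h2 := hα' s
    rw [abs_le, hM, sub_div]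
    constructor <;> [linarith [h1.2, h2.1]; linarith [h1.1, h2.2]]
  have key : ∑ s, b s * α' s - ∑ s, b s * α s ≤
      ∑ s, (b s - b' s) * (α' s - α s) := by
    have e : ∑ s, (b s - b' s) * (α' s - α s)
        = (∑ s, b s * α' s - ∑ s, b s * α s)
          - (∑ s, b' s * α' s - ∑ s, b' s * α s) := by
      rw [← Finset.sum_sub_distrib, ← Finset.sum_sub_distrib, ← Finset.sum_sub_distrib]
      congr 1; ext s; ring
    rw [e]; linarith
  calc ∑ s, b s * α' s - ∑ s, b s * α s
      ≤ ∑ s, (b s - b' s) * (α' s - α s) := key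
    _ ≤ ∑ s, |b s - b' s| * M := by
        apply Finset.sum_le_sum
        intro s _
        calc (b s - b' s) * (α' s - α s) ≤ |(b s - b' s) * (α' s - α s)| := le_abs_self _
          _ = |b s - b' s| * |α' s - α s| := abs_mul _ _
          _ ≤ |b s - b' s| * M := by
              exact mul_le_mul_of_nonneg_left (hbound s) (abs_nonneg _)
    _ = (∑ s, |b s - b' s|) * M := by rw [← Finset.sum_mul]
    _ ≤ ε * M := mul_le_mul_of_nonneg_right hdist hMnn
    _ = M * ε := mul_comm _ _
end

section
/- Let β₁ ≤ β₂ be positive reals, A finite nonempty, and Q : A → ℝ. Define the Boltzmann policy π_β(a) = exp(β·Q(a)) / ∑_{a'} exp(β·Q(a')). Then the expected value ∑_a π_β(a)·Q(a) is nondecreasing in β: ∑_a π_{β₁}(a)Q(a) ≤ ∑_a π_{β₂}(a)Q(a), and as β → ∞, ∑_a π_β(a)Q(a) → max_a Q(a). -/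
/-!
Write `π_β` for the Boltzmann policy. Since `π_{β₂} ∝ π_{β₁} · exp ((β₂ - β₁) Q)` and the reweighting
factor increases with `Q`, monotonicity is a weighted Chebyshev sum inequality. For the limit, note
`π_β a ≤ exp (β (Q a - max Q))`, so the mass of `π_β` on non-maximisers, and with it the gap
`max Q - ∑ π_β Q`, tends to zero.
-/

open Filter Topology Finset Real

theorem Monovary.weighted_sum_mul_sum_le_sum_mul_sum {ι : Type*} [Fintype ι] {w f g : ι → ℝ}
    (hw : ∀ i, 0 ≤ w i) (hfg : Monovary f g) :
    (∑ i, w i * f i) * (∑ i, w i * g i) ≤ (∑ i, w i) * ∑ i, w i * f i * g i := by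
  have hpairs : 0 ≤ ∑ i, ∑ j, w i * w j * ((f i - f j) * (g i - g j)) :=
    sum_nonneg fun i _ => sum_nonneg fun j _ =>
      mul_nonneg (mul_nonneg (hw i) (hw j)) (hfg.sub_mul_sub_nonneg j i)
  have hhalf : ∑ i, ∑ j, w i * w j * (f j * g j - f i * g j) =
      (∑ i, w i) * (∑ i, w i * f i * g i) - (∑ i, w i * f i) * (∑ i, w i * g i) := by
    simp only [sum_mul_sum, ← sum_sub_distrib]
    exact sum_congr rfl fun i _ => sum_congr rfl fun j _ => by ring
  have hsymm : ∑ i, ∑ j, w i * w j * ((f i - f j) * (g i - g j)) =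
      2 * ∑ i, ∑ j, w i * w j * (f j * g j - f i * g j) := by
    calc ∑ i, ∑ j, w i * w j * ((f i - f j) * (g i - g j))
        = ∑ i, ∑ j, (w i * w j * (f j * g j - f i * g j) + w j * w i * (f i * g i - f j * g i)) :=
          sum_congr rfl fun i _ => sum_congr rfl fun j _ => by ring
      _ = ∑ i, ∑ j, w i * w j * (f j * g j - f i * g j) +
            ∑ i, ∑ j, w j * w i * (f i * g i - f j * g i) := by
          simp only [sum_add_distrib]
      _ = 2 * ∑ i, ∑ j, w i * w j * (f j * g j - f i * g j) := by
          rw [sum_comm (f := fun i j => w j * w i * (f i * g i - f j * g i))]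
          ring
  linarith

theorem tendsto_exp_mul_mul_self_of_nonpos {s : ℝ} (hs : s ≤ 0) :
    Tendsto (fun β => exp (β * s) * s) atTop (𝓝 0) := by
  rcases hs.lt_or_eq with hs | rfl
  · simpa using (tendsto_exp_atBot.comp (tendsto_id.atTop_mul_const_of_neg hs)).mul_const s
  · simp

noncomputable section

namespace Boltzmann

variable {A : Type*} [Fintype A] (Q : A → ℝ)

def policy (β : ℝ) (a : A) : ℝ :=
  exp (β * Q a) / ∑ a', exp (β * Q a')

def value (β : ℝ) : ℝ :=
  ∑ a, policy Q β a * Q a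

theorem value_eq_div (β : ℝ) :
    value Q β = (∑ a, exp (β * Q a) * Q a) / ∑ a, exp (β * Q a) := by
  simp only [value, policy, sum_div, div_mul_eq_mul_div]

theorem policy_le_exp_mul_sub (β : ℝ) (a₀ a : A) : policy Q β a ≤ exp (β * (Q a - Q a₀)) := by
  have hterm : exp (β * Q a₀) ≤ ∑ a', exp (β * Q a') :=
    single_le_sum (f := fun a' => exp (β * Q a')) (fun _ _ => (exp_pos _).le) (mem_univ a₀)
  calc policy Q β a ≤ exp (β * Q a) / exp (β * Q a₀) :=
        div_le_div_of_nonneg_left (exp_pos _).le (exp_pos _) hterm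
    _ = exp (β * (Q a - Q a₀)) := by rw [← exp_sub, mul_sub]

variable [Nonempty A]

theorem sum_exp_mul_pos (β : ℝ) : 0 < ∑ a, exp (β * Q a) :=
  sum_pos (fun _ _ => exp_pos _) univ_nonempty

theorem policy_nonneg (β : ℝ) (a : A) : 0 ≤ policy Q β a :=
  div_nonneg (exp_pos _).le (sum_exp_mul_pos Q β).le

theorem sum_policy (β : ℝ) : ∑ a, policy Q β a = 1 := by
  simp only [policy, ← sum_div]
  exact div_self (sum_exp_mul_pos Q β).ne'

theorem value_monotone : Monotone (value Q) := by
  intro β₁ β₂ hβ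
  set w := fun a => exp (β₁ * Q a)
  set r := fun a => exp ((β₂ - β₁) * Q a)
  have hr : Monovary r Q := fun i j hij =>
    exp_le_exp.mpr (mul_le_mul_of_nonneg_left hij.le (sub_nonneg.mpr hβ))
  have hexp : ∀ a, exp (β₂ * Q a) = w a * r a := fun a => by
    rw [← exp_add]; ring_nf
  have hcheb := hr.weighted_sum_mul_sum_le_sum_mul_sum (fun a => (exp_pos (β₁ * Q a)).le)
  rw [value_eq_div, value_eq_div, div_le_div_iff₀ (sum_exp_mul_pos Q β₁) (sum_exp_mul_pos Q β₂)]
  simp only [hexp]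
  linarith

theorem value_le_of_forall_le {a₀ : A} (hmax : ∀ a, Q a ≤ Q a₀) (β : ℝ) : value Q β ≤ Q a₀ :=
  calc value Q β ≤ ∑ a, policy Q β a * Q a₀ :=
        sum_le_sum fun a _ => mul_le_mul_of_nonneg_left (hmax a) (policy_nonneg Q β a)
    _ = Q a₀ := by rw [← sum_mul, sum_policy, one_mul]

theorem le_value_of_forall_le {a₀ : A} (hmax : ∀ a, Q a ≤ Q a₀) (β : ℝ) :
    Q a₀ + ∑ a, exp (β * (Q a - Q a₀)) * (Q a - Q a₀) ≤ value Q β := by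
  have hgap : value Q β = Q a₀ + ∑ a, policy Q β a * (Q a - Q a₀) := by
    simp only [value, mul_sub, sum_sub_distrib, ← sum_mul, sum_policy, one_mul]
    ring
  rw [hgap]
  exact add_le_add le_rfl (sum_le_sum fun a _ =>
    mul_le_mul_of_nonpos_right (policy_le_exp_mul_sub Q β a₀ a) (sub_nonpos.mpr (hmax a)))

theorem tendsto_value_atTop : Tendsto (value Q) atTop (𝓝 (⨆ a, Q a)) := by
  obtain ⟨a₀, ha₀⟩ := exists_eq_ciSup_of_finite (f := Q)
  have hmax : ∀ a, Q a ≤ Q a₀ := fun a => ha₀ ▸ le_ciSup (Finite.bddAbove_range Q) a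
  have hlower : Tendsto (fun β => Q a₀ + ∑ a, exp (β * (Q a - Q a₀)) * (Q a - Q a₀))
      atTop (𝓝 (Q a₀)) := by
    simpa using tendsto_const_nhds.add <| tendsto_finsetSum univ fun a _ =>
      tendsto_exp_mul_mul_self_of_nonpos (sub_nonpos.mpr (hmax a))
  rw [← ha₀]
  exact tendsto_of_tendsto_of_tendsto_of_le_of_le hlower tendsto_const_nhds
    (le_value_of_forall_le Q hmax) (value_le_of_forall_le Q hmax)

end Boltzmann

end

theorem boltzmann_value_monotone_and_limit_general (A : Type*) [Fintype A] [Nonempty A]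
    (Q : A → ℝ) (β₁ β₂ : ℝ) (hβ : β₁ ≤ β₂) :
    (∑ a, (Real.exp (β₁ * Q a) / ∑ a', Real.exp (β₁ * Q a')) * Q a) ≤
      (∑ a, (Real.exp (β₂ * Q a) / ∑ a', Real.exp (β₂ * Q a')) * Q a) ∧
    Filter.Tendsto
      (fun β : ℝ => ∑ a, (Real.exp (β * Q a) / ∑ a', Real.exp (β * Q a')) * Q a)
      Filter.atTop (nhds (⨆ a, Q a)) :=
  ⟨Boltzmann.value_monotone Q hβ, Boltzmann.tendsto_value_atTop Q⟩

theorem boltzmann_value_monotone_and_limit (A : Type*) [Fintype A] [Nonempty A]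
    (Q : A → ℝ) (β₁ β₂ : ℝ) (hβ₁ : 0 < β₁) (hβ : β₁ ≤ β₂) :
    (∑ a, (Real.exp (β₁ * Q a) / ∑ a', Real.exp (β₁ * Q a')) * Q a) ≤
      (∑ a, (Real.exp (β₂ * Q a) / ∑ a', Real.exp (β₂ * Q a')) * Q a) ∧
    Filter.Tendsto
      (fun β : ℝ => ∑ a, (Real.exp (β * Q a) / ∑ a', Real.exp (β * Q a')) * Q a)
      Filter.atTop (nhds (⨆ a, Q a)) :=
  boltzmann_value_monotone_and_limit_general A Q β₁ β₂ hβ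
end
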